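/- arXiv:2408.04044 — 2 statements merged into one kernel-verified Lean document; each statement's English description precedes it below -/
import Mathlib

section
/- For (ξ,η) ∈ S^2 ⊂ R × C with ξ ≠ -1, the Hopf fiber over (ξ,η) equals the set { (ζ√(1+ξ)/√2, conj(η)ζ/(√2·√(1+ξ))) : ζ ∈ S^1 ⊂ C }, and the fiber over (-1,0) equals {(0,ζ) : ζ ∈ S^1}. -/
open Complex Real

/-- The Hopf map on `ℂ²`, sending `(a, b)` to `(|a|² - |b|², 2·a·conj b) ∈ ℝ × ℂ`. -/
noncomputable def hopfMap (p : ℂ × ℂ) : ℝ × ℂ :=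
  (‖p.1‖ ^ 2 - ‖p.2‖ ^ 2, 2 * p.1 * (starRingEnd ℂ) p.2)

/-- The unit sphere `S³ ⊂ ℂ²`. -/
def sphere3 : Set (ℂ × ℂ) := {p | ‖p.1‖ ^ 2 + ‖p.2‖ ^ 2 = 1}

/-- the explicit description of the Hopf fibers: over `(ξ, η) ∈ S² ⊂ ℝ × ℂ`
with `ξ ≠ -1` the fiber is `{(ζ√(1+ξ)/√2, conj(η)·ζ/(√2·√(1+ξ))) : ζ ∈ S¹}`, while the
fiber over `(-1, 0)` is `{(0, ζ) : ζ ∈ S¹}`. -/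
theorem hopf_fiber_explicit (ξ : ℝ) (η : ℂ) (hmem : ξ ^ 2 + ‖η‖ ^ 2 = 1) :
    (ξ ≠ -1 →
      {p : ℂ × ℂ | p ∈ sphere3 ∧ hopfMap p = (ξ, η)} =
        {p : ℂ × ℂ | ∃ ζ : ℂ, ‖ζ‖ = 1 ∧
          p = (ζ * (Real.sqrt (1 + ξ) : ℂ) / (Real.sqrt 2 : ℂ),
               (starRingEnd ℂ) η * ζ / ((Real.sqrt 2 : ℂ) * (Real.sqrt (1 + ξ) : ℂ)))}) ∧
    ({p : ℂ × ℂ | p ∈ sphere3 ∧ hopfMap p = (-1, 0)} =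
        {p : ℂ × ℂ | ∃ ζ : ℂ, ‖ζ‖ = 1 ∧ p = (0, ζ)}) := by
  constructor
  · intro hne
    have hle : -1 ≤ ξ := by nlinarith [sq_nonneg ‖η‖, sq_nonneg (ξ + 1)]
    have h1 : (0:ℝ) < 1 + ξ := by
      rcases lt_or_eq_of_le hle with h | h
      · linarith
      · exact absurd h.symm hne
    have hs : Real.sqrt (1 + ξ) ≠ 0 := by positivity
    have hsC : (Real.sqrt (1 + ξ) : ℂ) ≠ 0 := by exact_mod_cast hs
    have h2C : (Real.sqrt 2 : ℂ) ≠ 0 := by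
      have : Real.sqrt 2 ≠ 0 := by positivity
      exact_mod_cast this
    have hsq : (Real.sqrt (1 + ξ) : ℂ) * (Real.sqrt (1 + ξ) : ℂ) = (1 + ξ : ℂ) := by
      have h := Real.mul_self_sqrt h1.le
      calc ((Real.sqrt (1 + ξ) : ℝ) : ℂ) * ((Real.sqrt (1 + ξ) : ℝ) : ℂ)
          = ((Real.sqrt (1 + ξ) * Real.sqrt (1 + ξ) : ℝ) : ℂ) := by push_cast; ring
        _ = (1 + ξ : ℂ) := by rw [h]; push_cast; ring
    have h2sq : (Real.sqrt 2 : ℂ) * (Real.sqrt 2 : ℂ) = 2 := by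
      have : Real.sqrt 2 * Real.sqrt 2 = 2 := Real.mul_self_sqrt (by norm_num)
      exact_mod_cast this
    have hnsC : ‖((Real.sqrt (1 + ξ) : ℝ) : ℂ)‖ = Real.sqrt (1 + ξ) := by
      rw [Complex.norm_real, Real.norm_eq_abs, _root_.abs_of_nonneg (Real.sqrt_nonneg _)]
    have hn2C : ‖((Real.sqrt 2 : ℝ) : ℂ)‖ = Real.sqrt 2 := by
      rw [Complex.norm_real, Real.norm_eq_abs, _root_.abs_of_nonneg (Real.sqrt_nonneg _)]
    ext p
    simp only [Set.mem_setOf_eq, sphere3, hopfMap, Prod.mk.injEq, Prod.ext_iff]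
    constructor
    · rintro ⟨hS, h1', h2'⟩
      have ha2 : ‖p.1‖ ^ 2 = (1 + ξ) / 2 := by linarith
      have ha : p.1 ≠ 0 := by
        intro h
        rw [h] at ha2
        norm_num at ha2
        linarith
      refine ⟨p.1 * (Real.sqrt 2 : ℂ) / (Real.sqrt (1 + ξ) : ℂ), ?_, ?_, ?_⟩
      · have key : ‖p.1 * (Real.sqrt 2 : ℂ) / (Real.sqrt (1 + ξ) : ℂ)‖ ^ 2 = 1 := by
          rw [norm_div, norm_mul, hnsC, hn2C, div_pow, mul_pow,
            Real.sq_sqrt (by norm_num : (0:ℝ) ≤ 2), Real.sq_sqrt h1.le, ha2]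
          field_simp
        nlinarith [norm_nonneg (p.1 * (Real.sqrt 2 : ℂ) / (Real.sqrt (1 + ξ) : ℂ))]
      · rw [div_mul_cancel₀ _ hsC, mul_div_cancel_right₀ _ h2C]
      · have hconj : (starRingEnd ℂ) η = 2 * (starRingEnd ℂ) p.1 * p.2 := by
          rw [← h2', map_mul, map_mul, Complex.conj_conj, map_ofNat]
        have hmc : p.1 * (starRingEnd ℂ) p.1 = (1 + (ξ:ℂ)) / 2 := by
          calc p.1 * (starRingEnd ℂ) p.1 = ((‖p.1‖ ^ 2 : ℝ) : ℂ) := by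
                rw [Complex.mul_conj']; push_cast; ring
            _ = (1 + (ξ:ℂ)) / 2 := by rw [ha2]; push_cast; ring
        rw [hconj, eq_comm, ← mul_div_assoc, div_div, div_eq_iff
          (mul_ne_zero hsC (mul_ne_zero h2C hsC))]
        linear_combination 2 * (Real.sqrt 2 : ℂ) * p.2 * hmc -
          (Real.sqrt 2 : ℂ) * p.2 * hsq
    · rintro ⟨ζ, hζ, hp1, hp2⟩
      have hn1 : ‖p.1‖ ^ 2 = (1 + ξ) / 2 := by
        rw [hp1, norm_div, norm_mul, hnsC, hn2C, hζ, one_mul, div_pow,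
          Real.sq_sqrt (by norm_num : (0:ℝ) ≤ 2), Real.sq_sqrt h1.le]
      have hη2 : ‖η‖ ^ 2 = (1 - ξ) * (1 + ξ) := by nlinarith
      have hn2 : ‖p.2‖ ^ 2 = (1 - ξ) / 2 := by
        rw [hp2, norm_div, norm_mul, norm_mul, RCLike.norm_conj, hζ, mul_one, hnsC, hn2C,
          div_pow, mul_pow, Real.sq_sqrt (by norm_num : (0:ℝ) ≤ 2), Real.sq_sqrt h1.le, hη2]
        field_simp
      have hζζ : ζ * (starRingEnd ℂ) ζ = 1 := by
        rw [Complex.mul_conj', hζ]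
        norm_num
      refine ⟨by rw [hn1, hn2]; ring, by rw [hn1, hn2]; ring, ?_⟩
      rw [hp1, hp2, map_div₀, map_mul, map_mul, Complex.conj_conj,
        Complex.conj_ofReal, Complex.conj_ofReal]
      rw [← mul_div_assoc, div_eq_iff (mul_ne_zero h2C hsC)]
      have hinv : (Real.sqrt 2 : ℂ) * ((Real.sqrt 2 : ℂ))⁻¹ = 1 := mul_inv_cancel₀ h2C
      linear_combination (2 * η * (Real.sqrt (1 + ξ) : ℂ) * ((Real.sqrt 2 : ℂ))⁻¹) * hζζ -
        (η * (Real.sqrt (1 + ξ) : ℂ) * ((Real.sqrt 2 : ℂ))⁻¹) * h2sq +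
        (η * (Real.sqrt (1 + ξ) : ℂ) * (Real.sqrt 2 : ℂ)) * hinv
  · ext p
    simp only [Set.mem_setOf_eq, sphere3, hopfMap, Prod.mk.injEq, Prod.ext_iff]
    constructor
    · rintro ⟨hS, h1', h2'⟩
      have ha : ‖p.1‖ ^ 2 = 0 := by linarith
      have ha0 : p.1 = 0 := by
        simpa using (pow_eq_zero_iff (n := 2) (by norm_num)).mp (by simpa using ha)
      refine ⟨p.2, ?_, ha0, rfl⟩
      have : ‖p.2‖ ^ 2 = 1 := by rw [ha0] at hS; simpa using hS
      nlinarith [norm_nonneg p.2]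
    · rintro ⟨ζ, hζ, hp1, hp2⟩
      refine ⟨?_, ?_, ?_⟩ <;> rw [hp1, hp2] <;> simp [hζ]
end

section
/- For any ω ∈ S^3 and any polynomial f on ℝ^4 of degree at most t, (1/(t+1)) Σ_{j=0}^{t} f(ω e^{2πij/(t+1)}) = (I_π f)(π(ω)); i.e., the vertices of a regular (t+1)-gon on a Hopf fiber form a t-design on that fiber. -/
/-!
Along the Hopf fiber `θ ↦ ω e^{iθ}` every coordinate has the form `a cos θ + b sin θ`, so a
polynomial of degree at most `t` restricts to a trigonometric polynomial of degree at most `t`,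
a linear combination of the modes `e^{imθ}` with `|m| ≤ t`. Both averages are linear and agree
on each mode: for `m = 0` both are `1`, and for `0 < |m| ≤ t` both vanish, the circle average
by periodicity and the polygon average because `e^{2πim/(t+1)}` is a `(t+1)`-th root of unity
different from `1`.
-/

open Real MvPolynomial

/-- A point of `ℝ⁴ ≅ ℂ²` multiplied componentwise by `e^{iθ}` (rotation along the Hopf
fiber through it). -/
noncomputable def hopfRot (x : Fin 4 → ℝ) (θ : ℝ) : Fin 4 → ℝ :=
  ![x 0 * Real.cos θ - x 1 * Real.sin θ, x 0 * Real.sin θ + x 1 * Real.cos θ,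
    x 2 * Real.cos θ - x 3 * Real.sin θ, x 2 * Real.sin θ + x 3 * Real.cos θ]

open Complex (I)
open Finset

noncomputable def expMode (m : ℤ) (θ : ℝ) : ℂ := Complex.exp (m * θ * I)

lemma expMode_zero : expMode 0 = 1 := by
  ext θ
  simp [expMode]

lemma expMode_add (m k : ℤ) : expMode (m + k) = expMode m * expMode k := by
  ext θ
  simp only [expMode, Pi.mul_apply, ← Complex.exp_add]
  push_cast
  ring_nf

lemma continuous_expMode (m : ℤ) : Continuous (expMode m) := by
  unfold expMode
  fun_prop

lemma sum_expMode_polygon_eq_zero {n : ℕ} (hn : n ≠ 0) {m : ℤ} (hm : ¬ (n : ℤ) ∣ m) :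
    ∑ j ∈ range n, expMode m (2 * π * j / n) = 0 := by
  set μ := Complex.exp (2 * π * I / n)
  have hprim : IsPrimitiveRoot μ n := Complex.isPrimitiveRoot_exp n hn
  have hμm : ∀ j : ℕ, expMode m (2 * π * j / n) = (μ ^ m) ^ j := by
    intro j
    rw [expMode, ← zpow_natCast, ← zpow_mul, ← Complex.exp_int_mul]
    push_cast
    ring_nf
  have hμm_pow : (μ ^ m) ^ n = 1 := by
    rw [← zpow_natCast, ← zpow_mul, mul_comm, zpow_mul, zpow_natCast, hprim.pow_eq_one, one_zpow]
  have hμm_ne_one : μ ^ m ≠ 1 := mt (hprim.zpow_eq_one_iff_dvd m).1 hm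
  simp only [hμm, geom_sum_eq hμm_ne_one, hμm_pow, sub_self, zero_div]

lemma integral_expMode_eq_zero {m : ℤ} (hm : m ≠ 0) :
    ∫ θ in (0 : ℝ)..2 * π, expMode m θ = 0 := by
  have hc : (m * I : ℂ) ≠ 0 := mul_ne_zero (by exact_mod_cast hm) Complex.I_ne_zero
  simp only [expMode, mul_right_comm _ _ I]
  rw [integral_exp_mul_complex hc]
  have : (m * I : ℂ) * ((2 * π : ℝ) : ℂ) = m * (2 * π * I) := by push_cast; ring
  rw [this, Complex.exp_int_mul_two_pi_mul_I]
  simp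

noncomputable def trigPoly (n : ℕ) : Submodule ℂ (ℝ → ℂ) :=
  Submodule.span ℂ (expMode '' {m | |m| ≤ n})

lemma expMode_mem_trigPoly {m : ℤ} {n : ℕ} (hm : |m| ≤ n) : expMode m ∈ trigPoly n :=
  Submodule.subset_span ⟨m, hm, rfl⟩

lemma trigPoly_mono : Monotone trigPoly := by
  intro n k h
  refine Submodule.span_mono (Set.image_mono fun m hm => ?_)
  exact (show |m| ≤ n from hm).trans (by exact_mod_cast h)

lemma trigPoly_mul_le (n k : ℕ) : trigPoly n * trigPoly k ≤ trigPoly (n + k) := by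
  rw [trigPoly, trigPoly, Submodule.span_mul_span, Submodule.span_le]
  rintro _ ⟨_, ⟨m, hm, rfl⟩, _, ⟨l, hl, rfl⟩, rfl⟩
  show expMode m * expMode l ∈ _
  rw [← expMode_add]
  exact expMode_mem_trigPoly ((abs_add_le m l).trans (by push_cast; exact add_le_add hm hl))

instance : SetLike.GradedMonoid trigPoly where
  one_mem := expMode_zero ▸ expMode_mem_trigPoly (by simp)
  mul_mem n k _ _ hf hg := trigPoly_mul_le n k (Submodule.mul_mem_mul hf hg)

lemma continuous_of_mem_trigPoly {n : ℕ} {g : ℝ → ℂ} (hg : g ∈ trigPoly n) : Continuous g := by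
  induction hg using Submodule.span_induction with
  | mem _ h => obtain ⟨m, -, rfl⟩ := h; exact continuous_expMode m
  | zero => exact continuous_const
  | add _ _ _ _ h₁ h₂ => exact h₁.add h₂
  | smul c _ _ h => exact h.const_smul c

lemma cos_add_sin_mem_trigPoly_one (a b : ℝ) :
    (fun θ : ℝ => ((a * Real.cos θ + b * Real.sin θ : ℝ) : ℂ)) ∈ trigPoly 1 := by
  have h : (fun θ : ℝ => ((a * Real.cos θ + b * Real.sin θ : ℝ) : ℂ)) =
      ((a - b * I) / 2) • expMode 1 + ((a + b * I) / 2) • expMode (-1) := by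
    ext θ
    simp only [expMode, Pi.add_apply, Pi.smul_apply, smul_eq_mul]
    rw [show ((1 : ℤ) : ℂ) * θ * I = (θ : ℂ) * I by push_cast; ring,
      show ((-1 : ℤ) : ℂ) * θ * I = ((-θ : ℝ) : ℂ) * I by push_cast; ring,
      Complex.exp_mul_I, Complex.exp_mul_I]
    push_cast
    rw [Complex.cos_neg, Complex.sin_neg]
    linear_combination b * Complex.sin θ * Complex.I_sq
  rw [h]
  exact add_mem (Submodule.smul_mem _ _ (expMode_mem_trigPoly (by simp)))
    (Submodule.smul_mem _ _ (expMode_mem_trigPoly (by simp)))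

lemma eval_mem_trigPoly {σ : Type*} [Fintype σ] (x : ℝ → σ → ℝ)
    (hx : ∀ i, (fun θ => (x θ i : ℂ)) ∈ trigPoly 1) (f : MvPolynomial σ ℝ) :
    (fun θ => (eval (x θ) f : ℂ)) ∈ trigPoly f.totalDegree := by
  have hf : (fun θ => (eval (x θ) f : ℂ)) =
      ∑ d ∈ f.support, ((coeff d f : ℝ) : ℂ) • ∏ i, (fun θ => (x θ i : ℂ)) ^ d i := by
    ext θ
    simp [eval_eq']
  rw [hf]
  refine Submodule.sum_mem _ fun d hd => Submodule.smul_mem _ _ (trigPoly_mono ?_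
    (SetLike.prod_pow_mem_graded trigPoly (fun _ => 1) _ d fun i _ => hx i))
  simpa [Finsupp.sum_fintype] using le_totalDegree hd

theorem polygon_average_eq_integral_average {t n : ℕ} (htn : t < n) {g : ℝ → ℂ}
    (hg : g ∈ trigPoly t) :
    (1 / n : ℂ) * ∑ j ∈ range n, g (2 * π * j / n) =
      (1 / (2 * π)) * ∫ θ in (0 : ℝ)..2 * π, g θ := by
  induction hg using Submodule.span_induction with
  | mem _ h =>
    obtain ⟨m, hm, rfl⟩ := h
    rcases eq_or_ne m 0 with rfl | hm0
    · have hn : (n : ℂ) ≠ 0 := Nat.cast_ne_zero.2 (by omega)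
      simp only [expMode_zero, Pi.one_apply, sum_const, card_range, nsmul_eq_mul, mul_one,
        intervalIntegral.integral_const, sub_zero, Complex.real_smul]
      push_cast
      field_simp
    · have hdvd : ¬ (n : ℤ) ∣ m := fun hd =>
        hm0 (Int.eq_zero_of_abs_lt_dvd hd
        ((show |m| ≤ t from hm).trans_lt (by exact_mod_cast htn)))
      rw [sum_expMode_polygon_eq_zero (by omega) hdvd, integral_expMode_eq_zero hm0]
      simp
  | zero => simp
  | add g₁ g₂ hg₁ hg₂ h₁ h₂ =>
    simp only [Pi.add_apply, sum_add_distrib]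
    rw [intervalIntegral.integral_add ((continuous_of_mem_trigPoly hg₁).intervalIntegrable _ _)
      ((continuous_of_mem_trigPoly hg₂).intervalIntegrable _ _)]
    linear_combination h₁ + h₂
  | smul c g _ h =>
    simp only [Pi.smul_apply, smul_eq_mul, ← mul_sum, intervalIntegral.integral_const_mul]
    linear_combination c * h

lemma hopfRot_apply_mem_trigPoly (ω : Fin 4 → ℝ) (i : Fin 4) :
    (fun θ => (hopfRot ω θ i : ℂ)) ∈ trigPoly 1 := by
  obtain ⟨a, b, h⟩ : ∃ a b : ℝ, ∀ θ, hopfRot ω θ i = a * Real.cos θ + b * Real.sin θ := by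
    fin_cases i <;> simp only [hopfRot, Fin.isValue, Fin.zero_eta, Fin.mk_one, Fin.reduceFinMk,
      Matrix.cons_val, Matrix.cons_val_zero, Matrix.cons_val_one]
    exacts [⟨ω 0, -ω 1, fun θ => by ring⟩, ⟨ω 1, ω 0, fun θ => by ring⟩,
      ⟨ω 2, -ω 3, fun θ => by ring⟩, ⟨ω 3, ω 2, fun θ => by ring⟩]
  simpa only [h] using cos_add_sin_mem_trigPoly_one a b

theorem polygon_design_on_fiber_general (t : ℕ) (ω : Fin 4 → ℝ)
    (f : MvPolynomial (Fin 4) ℝ) (hf : f.totalDegree ≤ t) :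
    (1 / (t + 1 : ℝ)) * ∑ j ∈ Finset.range (t + 1),
        eval (hopfRot ω (2 * π * j / (t + 1))) f =
      (1 / (2 * π)) * ∫ θ in (0:ℝ)..(2 * π), eval (hopfRot ω θ) f := by
  have hg : (fun θ => (eval (hopfRot ω θ) f : ℂ)) ∈ trigPoly t :=
    trigPoly_mono hf (eval_mem_trigPoly _ (hopfRot_apply_mem_trigPoly ω) f)
  have h := polygon_average_eq_integral_average (Nat.lt_succ_self t) hg
  apply Complex.ofReal_injective
  rw [intervalIntegral.integral_ofReal] at h
  push_cast at h ⊢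
  exact h

/-- for `ω ∈ S³` and a polynomial `f` on `ℝ⁴` of degree at most `t`, the
average of `f` over the vertices of a regular `(t+1)`-gon on the Hopf fiber through `ω`
equals the average `(I_π f)(π(ω))` of `f` over the whole fiber (a great circle of
circumference `2π`): the `(t+1)`-gon is a `t`-design on the fiber. -/
theorem polygon_design_on_fiber (t : ℕ) (ω : Fin 4 → ℝ)
    (hω : ω 0 ^ 2 + ω 1 ^ 2 + ω 2 ^ 2 + ω 3 ^ 2 = 1)
    (f : MvPolynomial (Fin 4) ℝ) (hf : f.totalDegree ≤ t) :
    (1 / (t + 1 : ℝ)) * ∑ j ∈ Finset.range (t + 1),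
        eval (hopfRot ω (2 * π * j / (t + 1))) f =
      (1 / (2 * π)) * ∫ θ in (0:ℝ)..(2 * π), eval (hopfRot ω θ) f :=
  polygon_design_on_fiber_general t ω f hf
end
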